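/- Let m ≥ 1 and let 𝒯 be a nonempty finite index set. Let μ : Fin m → ℝ with μ(i) > 0 for all i. For each T ∈ 𝒯, let k(T) ∈ ℕ, let A^T_1, …, A^T_{k(T)} be pairwise disjoint nonempty subsets of Fin m, and let β^T_1, …, β^T_{k(T)} be nonnegative reals; write α^T_j = √(Σ_{i ∈ A^T_j} μ(i)²) (which is positive). Let s : Fin m → 𝒯 → ℝ be nonnegative. If for every i ∈ Fin m one has Σ_{T ∈ 𝒯} s(i,T) > Σ_{T ∈ 𝒯} Σ_{j : i ∈ A^T_j} (β^T_j / α^T_j)·μ(i), then Σ_{i=1}^{m} ( Σ_{T ∈ 𝒯} s(i,T) )² > Σ_{T ∈ 𝒯} Σ_{j=1}^{k(T)} (β^T_j)². -/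

import Mathlib

/-!
For each split `i`, the terms `(β/α)·μᵢ` on the right of the hypothesis are nonnegative, so the
sum of their squares is at most the square of their sum, hence below `(∑_T s(i,T))²`. Summing
over `i` and regrouping by blocks, each block contributes `∑_{i ∈ A} (β μᵢ / α)² = β²`, because
`α` is exactly the Euclidean norm of `μ` on `A`.
-/

open Finset

theorem Finset.sum_sum_filter_mem_comm {ι κ M : Type*} [Fintype ι] [DecidableEq ι] [Fintype κ]
    [AddCommMonoid M] (A : κ → Finset ι) (f : ι → κ → M) :
    ∑ i, ∑ j ∈ univ.filter (fun j => i ∈ A j), f i j = ∑ j, ∑ i ∈ A j, f i j := by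
  simp_rw [sum_filter]
  rw [sum_comm]
  simp_rw [← sum_filter, filter_mem_eq_inter, univ_inter]

theorem Finset.sum_sum_sq_le_sq_sum_sum_of_nonneg {ι : Type*} {κ : ι → Type*}
    (s : Finset ι) (t : (i : ι) → Finset (κ i)) (f : (i : ι) → κ i → ℝ)
    (hf : ∀ i ∈ s, ∀ j ∈ t i, 0 ≤ f i j) :
    ∑ i ∈ s, ∑ j ∈ t i, f i j ^ 2 ≤ (∑ i ∈ s, ∑ j ∈ t i, f i j) ^ 2 := by
  rw [sum_sigma', sum_sigma']
  exact sum_sq_le_sq_sum_of_nonneg fun x hx => hf x.1 (mem_sigma.1 hx).1 x.2 (mem_sigma.1 hx).2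

theorem Finset.sum_sq_div_sqrt_sum_sq_mul {ι : Type*} (A : Finset ι) (μ : ι → ℝ) (b : ℝ)
    (hA : ∑ i ∈ A, μ i ^ 2 ≠ 0) :
    ∑ i ∈ A, (b / Real.sqrt (∑ i' ∈ A, μ i' ^ 2) * μ i) ^ 2 = b ^ 2 := by
  have hsq : Real.sqrt (∑ i' ∈ A, μ i' ^ 2) ^ 2 = ∑ i' ∈ A, μ i' ^ 2 :=
    Real.sq_sqrt (sum_nonneg fun _ _ => sq_nonneg _)
  simp_rw [mul_pow, ← mul_sum, div_pow, hsq]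
  exact div_mul_cancel₀ _ hA

open Finset in
theorem mean_implies_core_general {𝒯 : Type*} [Fintype 𝒯]
    (m : ℕ) (hm : 1 ≤ m)
    (μ : Fin m → ℝ) (hμ : ∀ i, 0 < μ i)
    (k : 𝒯 → ℕ)
    (A : (T : 𝒯) → Fin (k T) → Finset (Fin m))
    (hAne : ∀ T j, (A T j).Nonempty)
    (β : (T : 𝒯) → Fin (k T) → ℝ) (hβ : ∀ T j, 0 ≤ β T j)
    (s : Fin m → 𝒯 → ℝ)
    (h : ∀ i : Fin m,
      ∑ T : 𝒯, s i T >
        ∑ T : 𝒯, ∑ j ∈ univ.filter (fun j => i ∈ A T j),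
          (β T j / Real.sqrt (∑ i' ∈ A T j, (μ i') ^ 2)) * μ i) :
    ∑ i : Fin m, (∑ T : 𝒯, s i T) ^ 2 > ∑ T : 𝒯, ∑ j : Fin (k T), (β T j) ^ 2 := by
  set w : Fin m → (T : 𝒯) → Fin (k T) → ℝ :=
    fun i T j => β T j / Real.sqrt (∑ i' ∈ A T j, μ i' ^ 2) * μ i
  have hw : ∀ i T j, 0 ≤ w i T j := fun i T j =>
    mul_nonneg (div_nonneg (hβ T j) (Real.sqrt_nonneg _)) (hμ i).le
  have regroup : ∑ T : 𝒯, ∑ j, β T j ^ 2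
      = ∑ i, ∑ T, ∑ j ∈ univ.filter (fun j => i ∈ A T j), w i T j ^ 2 := by
    rw [sum_comm]
    refine sum_congr rfl fun T _ => ?_
    rw [sum_sum_filter_mem_comm]
    refine sum_congr rfl fun j _ => (sum_sq_div_sqrt_sum_sq_mul _ _ _ ?_).symm
    exact (sum_pos (fun i _ => pow_pos (hμ i) 2) (hAne T j)).ne'
  have : Nonempty (Fin m) := ⟨⟨0, hm⟩⟩
  rw [regroup]
  refine sum_lt_sum_of_nonempty univ_nonempty fun i _ => ?_
  calc ∑ T, ∑ j ∈ univ.filter (fun j => i ∈ A T j), w i T j ^ 2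
      ≤ (∑ T, ∑ j ∈ univ.filter (fun j => i ∈ A T j), w i T j) ^ 2 :=
        sum_sum_sq_le_sq_sum_sum_of_nonneg _ _ _ fun T _ j _ => hw i T j
    _ < (∑ T, s i T) ^ 2 :=
        pow_lt_pow_left₀ (h i) (sum_nonneg fun T _ => sum_nonneg fun j _ => hw i T j)
          two_ne_zero

open Finset in
/-- Computational core of Theorem 3.8 (the necessary condition for splits of the
Fréchet mean), abstracted from geodesic supports. -/
theorem mean_implies_core {𝒯 : Type*} [Fintype 𝒯] [Nonempty 𝒯]
    (m : ℕ) (hm : 1 ≤ m)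
    (μ : Fin m → ℝ) (hμ : ∀ i, 0 < μ i)
    (k : 𝒯 → ℕ)
    (A : (T : 𝒯) → Fin (k T) → Finset (Fin m))
    (hAne : ∀ T j, (A T j).Nonempty)
    (hAdisj : ∀ T, ∀ j j' : Fin (k T), j ≠ j' → Disjoint (A T j) (A T j'))
    (β : (T : 𝒯) → Fin (k T) → ℝ) (hβ : ∀ T j, 0 ≤ β T j)
    (s : Fin m → 𝒯 → ℝ) (hs : ∀ i T, 0 ≤ s i T)
    (h : ∀ i : Fin m,
      ∑ T : 𝒯, s i T >
        ∑ T : 𝒯, ∑ j ∈ univ.filter (fun j => i ∈ A T j),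
          (β T j / Real.sqrt (∑ i' ∈ A T j, (μ i') ^ 2)) * μ i) :
    ∑ i : Fin m, (∑ T : 𝒯, s i T) ^ 2 > ∑ T : 𝒯, ∑ j : Fin (k T), (β T j) ^ 2 :=
  mean_implies_core_general m hm μ hμ k A hAne β hβ s h
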